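/- arXiv:2112.12367 — 6 statements merged into one kernel-verified Lean document; each statement's English description precedes it below -/
import Mathlib

section
/- Let F ⊆ E ⊆ E' be a tower of nonarchimedean local fields with E/F and E'/F finite tamely ramified extensions, and let C_E and C_{E'} be defined with respect to the same fixed uniformizer π_F of F. Then C_E ⊆ C_{E'} as subgroups of E'^×. -/
/-- A surjective additive `ℤ`-valued valuation on a field `K`, written additively with
values in `WithTop ℤ` (with `v 0 = ⊤`). -/
structure IsZValuation (K : Type*) [Field K] (v : K → WithTop ℤ) : Prop where
  map_zero : v 0 = ⊤
  map_one : v 1 = 0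
  map_mul : ∀ x y : K, v (x * y) = v x + v y
  min_le_map_add : ∀ x y : K, min (v x) (v y) ≤ v (x + y)
  surjective : ∀ n : ℤ, ∃ x : K, v x = (n : WithTop ℤ)

/-- `K`, equipped with the normalized valuation `v`, is a nonarchimedean local field with
residue characteristic `p`: `v` is a surjective `ℤ`-valued valuation, `K` is (sequentially)
complete with respect to `v`, the residue field is finite (the valuation ring is covered by
finitely many residue classes), and `p` is a prime number of positive valuation (so the
residue field has characteristic `p`). -/
structure IsNonarchLocalField (K : Type*) [Field K] (v : K → WithTop ℤ) (p : ℕ) : Prop where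
  isZValuation : IsZValuation K v
  complete : ∀ f : ℕ → K,
    (∀ N : ℤ, ∃ M : ℕ, ∀ m, M ≤ m → ∀ n, M ≤ n → (N : WithTop ℤ) ≤ v (f m - f n)) →
    ∃ L : K, ∀ N : ℤ, ∃ M : ℕ, ∀ n, M ≤ n → (N : WithTop ℤ) ≤ v (f n - L)
  finiteResidue : ∃ S : Finset K, ∀ x : K, 0 ≤ v x → ∃ s ∈ S, 0 < v (x - s)
  prime : p.Prime
  v_p_pos : 0 < v (p : K)
/-- `z` is a root of unity whose order is prime to `p`. -/
def IsPrimeToRootOfUnity (p : ℕ) {K : Type*} [Monoid K] (z : K) : Prop :=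
  ∃ n : ℕ, 0 < n ∧ ¬ p ∣ n ∧ z ^ n = 1

/-- The subgroup `C_E` of `Eˣ` generated by the uniformizer `πE` together with all roots
of unity in `E` of order prime to `p`. -/
def stdGroup (p : ℕ) {E : Type*} [Field E] (πE : Eˣ) : Subgroup Eˣ :=
  Subgroup.closure ({πE} ∪ {z : Eˣ | IsPrimeToRootOfUnity p (z : E)})

/-!
Comparing `π_E ^ e₁ * z_E = π_F = π_{E'} ^ (e₁ e₂) * z_{E'}` shows that
`u = π_E / π_{E'} ^ e₂` satisfies `u ^ e₁ = z_{E'} / z_E`, a root of unity of order prime to `p`.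
Since `p ∤ e₁`, `u` is itself such a root of unity, so `π_E = π_{E'} ^ e₂ * u ∈ C_{E'}`;
the roots of unity of `E` of order prime to `p` stay such roots in `E'`.
-/

namespace IsPrimeToRootOfUnity

variable {p : ℕ}

theorem ne_zero {M : Type*} [MonoidWithZero M] [Nontrivial M] {z : M}
    (hz : IsPrimeToRootOfUnity p z) : z ≠ 0 := by
  obtain ⟨n, hn, -, hzn⟩ := hz
  rintro rfl
  rw [zero_pow hn.ne'] at hzn
  exact zero_ne_one hzn

theorem map {M N F : Type*} [Monoid M] [Monoid N] [FunLike F M N] [MonoidHomClass F M N]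
    (f : F) {z : M} (hz : IsPrimeToRootOfUnity p z) : IsPrimeToRootOfUnity p (f z) := by
  obtain ⟨n, hn, hpn, hzn⟩ := hz
  exact ⟨n, hn, hpn, by rw [← map_pow, hzn, map_one]⟩

theorem div {M : Type*} [DivisionCommMonoid M] (hp : p.Prime) {a b : M}
    (ha : IsPrimeToRootOfUnity p a) (hb : IsPrimeToRootOfUnity p b) :
    IsPrimeToRootOfUnity p (a / b) := by
  obtain ⟨m, hm, hpm, ham⟩ := ha
  obtain ⟨n, hn, hpn, hbn⟩ := hb
  refine ⟨m * n, Nat.mul_pos hm hn, fun h => (hp.dvd_mul.1 h).elim hpm hpn, ?_⟩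
  rw [div_pow, pow_mul, ham, mul_comm, pow_mul, hbn, one_pow, one_pow, div_one]

theorem of_pow {M : Type*} [Monoid M] (hp : p.Prime) {k : ℕ} (hpk : ¬ p ∣ k) {u : M}
    (hu : IsPrimeToRootOfUnity p (u ^ k)) : IsPrimeToRootOfUnity p u := by
  obtain ⟨n, hn, hpn, hun⟩ := hu
  have hk : 0 < k := Nat.pos_of_ne_zero fun h => hpk (h ▸ dvd_zero p)
  exact ⟨k * n, Nat.mul_pos hk hn, fun h => (hp.dvd_mul.1 h).elim hpk hpn, by rwa [pow_mul]⟩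

end IsPrimeToRootOfUnity

section stdGroup

variable {p : ℕ} {K : Type*} [Field K]

theorem self_mem_stdGroup (π : Kˣ) : π ∈ stdGroup p π :=
  Subgroup.subset_closure (Set.mem_union_left _ rfl)

theorem mem_stdGroup_of_isPrimeToRootOfUnity (π : Kˣ) {z : Kˣ}
    (hz : IsPrimeToRootOfUnity p (z : K)) : z ∈ stdGroup p π :=
  Subgroup.subset_closure (Set.mem_union_right _ hz)

theorem mem_stdGroup_of_pow_mul_eq (hp : p.Prime) {e f : ℕ} (hpe : ¬ p ∣ e)
    {π π' : Kˣ} {z z' : K} (hz : IsPrimeToRootOfUnity p z) (hz' : IsPrimeToRootOfUnity p z')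
    (h : (π : K) ^ e * z = (π' : K) ^ (e * f) * z') : π ∈ stdGroup p π' := by
  set u : Kˣ := π * (π' ^ f)⁻¹
  have hu_pow : (u : K) ^ e = z' / z := by
    rw [eq_div_iff hz.ne_zero]
    simp only [u, Units.val_mul, Units.val_inv_eq_inv_val, Units.val_pow_eq_pow_val]
    rw [mul_pow, inv_pow, ← pow_mul, mul_comm f, mul_right_comm, h, mul_comm,
      inv_mul_cancel_left₀ (pow_ne_zero _ π'.ne_zero)]
  have hu : IsPrimeToRootOfUnity p (u : K) :=
    .of_pow hp hpe (hu_pow ▸ hz'.div hp hz)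
  have hπ : π = π' ^ f * u := by rw [mul_comm, inv_mul_cancel_right]
  rw [hπ]
  exact mul_mem (pow_mem (self_mem_stdGroup π') f) (mem_stdGroup_of_isPrimeToRootOfUnity π' hu)

theorem map_stdGroup_le {L : Type*} [Field L] (φ : K →+* L) {π : Kˣ} {π' : Lˣ}
    (hπ : Units.map φ.toMonoidHom π ∈ stdGroup p π') :
    (stdGroup p π).map (Units.map φ.toMonoidHom) ≤ stdGroup p π' := by
  rw [stdGroup, MonoidHom.map_closure, Subgroup.closure_le]
  rintro _ ⟨x, hx | hx, rfl⟩
  · exact (Set.mem_singleton_iff.1 hx) ▸ hπ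
  · exact mem_stdGroup_of_isPrimeToRootOfUnity π' (hx.map φ)

end stdGroup

theorem stdGroup_le_stdGroup_of_tower_general
    (p : ℕ) (F E E' : Type*) [Field F] [Field E] [Field E']
    [Algebra F E] [Algebra E E'] [Algebra F E'] [IsScalarTower F E E']
    (vF : F → WithTop ℤ)
    (hF : IsNonarchLocalField F vF p)
    (e₁ e₂ : ℕ)
    (htame : ¬ p ∣ e₁)
    (πF : F)
    (πE : Eˣ)
    (zE : E) (hzE : IsPrimeToRootOfUnity p zE)
    (hπzE : (πE : E) ^ e₁ * zE = algebraMap F E πF)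
    (πE' : E'ˣ)
    (zE' : E') (hzE' : IsPrimeToRootOfUnity p zE')
    (hπzE' : (πE' : E') ^ (e₁ * e₂) * zE' = algebraMap F E' πF) :
    (stdGroup p πE).map (Units.map (algebraMap E E').toMonoidHom) ≤ stdGroup p πE' := by
  have hπ : (algebraMap E E' πE) ^ e₁ * algebraMap E E' zE = (πE' : E') ^ (e₁ * e₂) * zE' := by
    rw [hπzE', IsScalarTower.algebraMap_apply F E E', ← hπzE, map_mul, map_pow]
  exact map_stdGroup_le _ (mem_stdGroup_of_pow_mul_eq hF.prime htame (hzE.map _) hzE' hπ)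

/-- For a tower `F ⊆ E ⊆ E'` of finite tamely ramified extensions of
nonarchimedean local fields, with `C_E` and `C_{E'}` defined with respect to the same
uniformizer `πF` of `F`, one has `C_E ⊆ C_{E'}` (as subgroups of `E'ˣ`, via the inclusion
`E ⊆ E'`). -/
theorem stdGroup_le_stdGroup_of_tower
    (p : ℕ) (F E E' : Type*) [Field F] [Field E] [Field E']
    [Algebra F E] [Algebra E E'] [Algebra F E'] [IsScalarTower F E E']
    [FiniteDimensional F E] [FiniteDimensional E E']
    (vF : F → WithTop ℤ) (vE : E → WithTop ℤ) (vE' : E' → WithTop ℤ)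
    (hF : IsNonarchLocalField F vF p) (hE : IsNonarchLocalField E vE p)
    (hE' : IsNonarchLocalField E' vE' p)
    (e₁ e₂ : ℕ)
    (hcomp : ∀ x : F, vE (algebraMap F E x) = e₁ • vF x)
    (hcomp' : ∀ x : E, vE' (algebraMap E E' x) = e₂ • vE x)
    (htame : ¬ p ∣ e₁) (htame' : ¬ p ∣ (e₁ * e₂))
    (πF : F) (hπF : vF πF = 1)
    (πE : Eˣ) (hπE : vE ↑πE = 1)
    (zE : E) (hzE : IsPrimeToRootOfUnity p zE)
    (hπzE : (πE : E) ^ e₁ * zE = algebraMap F E πF)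
    (πE' : E'ˣ) (hπE' : vE' ↑πE' = 1)
    (zE' : E') (hzE' : IsPrimeToRootOfUnity p zE')
    (hπzE' : (πE' : E') ^ (e₁ * e₂) * zE' = algebraMap F E' πF) :
    (stdGroup p πE).map (Units.map (algebraMap E E').toMonoidHom) ≤ stdGroup p πE' :=
  stdGroup_le_stdGroup_of_tower_general p F E E' vF hF e₁ e₂ htame πF πE zE hzE hπzE πE' zE' hzE'
    hπzE'
end

section
/- Let E/F be a finite Galois tamely ramified extension of nonarchimedean local fields, with C_E defined with respect to a fixed uniformizer π_F of F. Then for every σ ∈ Gal(E/F), we have σ(C_E) = C_E. -/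
/-- If `E/F` is a finite Galois tamely ramified extension of
nonarchimedean local fields, then every `σ ∈ Gal(E/F)` maps `C_E` onto `C_E`. -/
theorem stdGroup_map_galois_eq
    (p : ℕ) (F E : Type*) [Field F] [Field E] [Algebra F E] [FiniteDimensional F E]
    [IsGalois F E]
    (vF : F → WithTop ℤ) (vE : E → WithTop ℤ)
    (hF : IsNonarchLocalField F vF p) (hE : IsNonarchLocalField E vE p)
    (e : ℕ) (hcomp : ∀ x : F, vE (algebraMap F E x) = e • vF x)
    (htame : ¬ p ∣ e)
    (πF : F) (hπF : vF πF = 1)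
    (πE : Eˣ) (hπE : vE ↑πE = 1)
    (zE : E) (hzE : IsPrimeToRootOfUnity p zE)
    (hπzE : (πE : E) ^ e * zE = algebraMap F E πF)
    (σ : E ≃ₐ[F] E) :
    (stdGroup p πE).map (Units.map (σ : E →* E)) = stdGroup p πE := by
  obtain ⟨n, hn, hpn, hzn⟩ := hzE
  have he : e ≠ 0 := by
    rintro rfl
    have h0 := hcomp 0
    rw [map_zero, hE.isZValuation.map_zero, zero_smul] at h0
    simp at h0
  have hle : ∀ τ : E ≃ₐ[F] E,
      (stdGroup p πE).map (Units.map (τ : E →* E)) ≤ stdGroup p πE := by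
    intro τ
    rw [stdGroup, MonoidHom.map_closure]
    apply (Subgroup.closure_le _).2
    rintro _ ⟨x, hx, rfl⟩
    rcases hx with hx | hx
    · rw [Set.mem_singleton_iff] at hx; rw [hx]
      have hmemπ : πE ∈ stdGroup p πE := Subgroup.subset_closure (Or.inl rfl)
      set w : Eˣ := Units.map (τ : E →* E) πE * πE⁻¹ with hw
      have hτzn : (τ zE) ^ n = 1 := by rw [← map_pow, hzn, map_one]
      have h1 : (τ (πE : E)) ^ e * τ zE = (πE : E) ^ e * zE := by
        have h2 := congrArg τ hπzE
        rw [map_mul, map_pow, τ.commutes] at h2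
        rw [h2, hπzE]
      have key : (τ (πE : E)) ^ (e * n) = ((πE : E)) ^ (e * n) := by
        calc (τ (πE : E)) ^ (e * n)
            = (τ (πE : E)) ^ (e * n) * (τ zE) ^ n := by rw [hτzn, mul_one]
          _ = ((τ (πE : E)) ^ e * τ zE) ^ n := by rw [mul_pow, pow_mul]
          _ = ((πE : E) ^ e * zE) ^ n := by rw [h1]
          _ = (πE : E) ^ (e * n) * zE ^ n := by rw [mul_pow, pow_mul]
          _ = (πE : E) ^ (e * n) := by rw [hzn, mul_one]
      have hwmem : w ∈ stdGroup p πE := by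
        apply Subgroup.subset_closure
        right
        refine ⟨e * n, Nat.mul_pos (Nat.pos_of_ne_zero he) hn, ?_, ?_⟩
        · intro h
          rcases (Nat.Prime.dvd_mul hF.prime).1 h with h | h
          exacts [htame h, hpn h]
        · have : ((w : E)) ^ (e * n) = 1 := by
            rw [hw, Units.val_mul, Units.coe_map, mul_pow, MonoidHom.coe_coe, key,
              ← Units.val_pow_eq_pow_val, ← Units.val_pow_eq_pow_val, ← Units.val_mul,
              ← mul_pow, mul_inv_cancel, one_pow, Units.val_one]
          exact this
      have : Units.map (τ : E →* E) πE = w * πE := by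
        rw [hw, inv_mul_cancel_right]
      rw [this]
      exact (stdGroup p πE).mul_mem hwmem hmemπ
    · obtain ⟨m, hm, hpm, hxm⟩ := hx
      apply Subgroup.subset_closure
      right
      refine ⟨m, hm, hpm, ?_⟩
      rw [Units.coe_map, MonoidHom.coe_coe, ← map_pow, hxm, map_one]
  refine le_antisymm (hle σ) ?_
  intro g hg
  refine ⟨Units.map (σ.symm : E →* E) g, hle σ.symm ⟨g, hg, rfl⟩, ?_⟩
  ext
  simp
end

section
/- Let E/F be a finite tamely ramified extension of nonarchimedean local fields, let s ∈ C_E, and let σ_1, σ_2 : E → F̄ be F-algebra embeddings into an algebraic closure F̄ of F such that σ_1(s) ≠ σ_2(s). Then ord(σ_1(s) − σ_2(s)) = ord(s). -/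
/-- A `ℚ`-valued valuation, written additively with values in `WithTop ℚ`. -/
structure IsQValuation (K : Type*) [Field K] (w : K → WithTop ℚ) : Prop where
  map_zero : w 0 = ⊤
  map_one : w 1 = 0
  map_mul : ∀ x y : K, w (x * y) = w x + w y
  min_le_map_add : ∀ x y : K, min (w x) (w y) ≤ w (x + y)

/-!
Every `s ∈ C_E` has a power `s ^ N` with `p ∤ N` lying in `F` (for `πE` take `N = e · n`, where
`zE ^ n = 1`). Hence `σ₁ s ^ N = σ₂ s ^ N`, and `u = σ₁ s / σ₂ s` is a root of unity of order prime to `p`;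
comparing `vE (s ^ N) = e · vF (s ^ N)` with `ord (σ s ^ N) = vF (s ^ N)` gives
`ord (σ s) = vE s / e`. Finally `ord (u - 1) = 0`: it is nonnegative, and `u - 1` divides
`N = ∑_{i < N} (1 - u ^ i)` among the elements of nonnegative valuation, while `ord N = 0`.
-/

namespace AddValuation

variable {R Γ₀ : Type*} [CommRing R] [LinearOrderedAddCommMonoidWithTop Γ₀]
  (v : AddValuation R Γ₀)

theorem map_natCast_nonneg (n : ℕ) : 0 ≤ v n := by
  induction n with
  | zero => simp
  | succ n ih =>
    rw [Nat.cast_succ]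
    exact v.map_le_add ih v.map_one.ge

theorem map_intCast_nonneg (a : ℤ) : 0 ≤ v a := by
  obtain ⟨n, rfl | rfl⟩ := Int.eq_nat_or_neg a
  · simpa using v.map_natCast_nonneg n
  · simpa [v.map_neg] using v.map_natCast_nonneg n

theorem map_natCast_eq_zero_of_not_dvd {p n : ℕ} (hp : p.Prime) (hvp : 0 < v p)
    (hpn : ¬ p ∣ n) : v n = 0 := by
  refine le_antisymm ?_ (v.map_natCast_nonneg n)
  by_contra! hvn
  obtain ⟨a, b, hab⟩ := Nat.isCoprime_iff_coprime.mpr (hp.coprime_iff_not_dvd.mpr hpn)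
  have h1 : (1 : R) = a * p + b * n := by
    simpa using (congrArg (Int.cast : ℤ → R) hab).symm
  have hap : 0 < v (a * p) :=
    v.map_mul _ _ ▸ hvp.trans_le (le_add_of_nonneg_left (v.map_intCast_nonneg a))
  have hbn : 0 < v (b * n) :=
    v.map_mul _ _ ▸ hvn.trans_le (le_add_of_nonneg_left (v.map_intCast_nonneg b))
  have hpos := v.map_lt_add hap hbn
  rw [← h1, v.map_one] at hpos
  exact hpos.false

theorem map_nonneg_of_pow_eq_one {x : R} {n : ℕ} (hn : n ≠ 0) (h : x ^ n = 1) : 0 ≤ v x := by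
  by_contra! hneg
  have := nsmul_neg hneg hn
  rw [← v.map_pow, h, v.map_one] at this
  exact this.false

variable [NoZeroDivisors R]

theorem map_sub_one_le_map_natCast_of_pow_eq_one {u : R} {n : ℕ} (hun : u ^ n = 1)
    (hu : u ≠ 1) (hvu : 0 ≤ v u) : v (u - 1) ≤ v n := by
  have hgeom : ∑ i ∈ Finset.range n, u ^ i = 0 := by
    have h := geom_sum_mul u n
    rw [hun, sub_self] at h
    exact (mul_eq_zero.mp h).resolve_right (sub_ne_zero.mpr hu)
  have hn : (n : R) = (u - 1) * -∑ i ∈ Finset.range n, ∑ j ∈ Finset.range i, u ^ j := by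
    calc (n : R) = ∑ i ∈ Finset.range n, (1 - u ^ i) := by
          simp [Finset.sum_sub_distrib, hgeom]
      _ = _ := by
          rw [mul_neg, Finset.mul_sum, ← Finset.sum_neg_distrib]
          refine Finset.sum_congr rfl fun i _ => ?_
          rw [mul_comm, geom_sum_mul]
          ring
  rw [hn, v.map_mul, v.map_neg]
  refine le_add_of_nonneg_right (v.map_le_sum fun i _ => v.map_le_sum fun j _ => ?_)
  exact v.map_pow u j ▸ nsmul_nonneg hvu j

theorem map_sub_one_eq_zero_of_pow_eq_one {p n : ℕ} (hp : p.Prime) (hvp : 0 < v p)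
    (hpn : ¬ p ∣ n) {u : R} (hun : u ^ n = 1) (hu : u ≠ 1) : v (u - 1) = 0 := by
  have hvu : 0 ≤ v u := v.map_nonneg_of_pow_eq_one (by rintro rfl; exact hpn (dvd_zero p)) hun
  refine le_antisymm ?_ (v.map_le_sub hvu v.map_one.ge)
  exact (v.map_sub_one_le_map_natCast_of_pow_eq_one hun hu hvu).trans_eq
    (v.map_natCast_eq_zero_of_not_dvd hp hvp hpn)

end AddValuation

def IsZValuation.toAddValuation {K : Type*} [Field K] {v : K → WithTop ℤ}
    (hv : IsZValuation K v) : AddValuation K (WithTop ℤ) :=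
  AddValuation.of v hv.map_zero hv.map_one hv.min_le_map_add hv.map_mul

def IsQValuation.toAddValuation {K : Type*} [Field K] {w : K → WithTop ℚ}
    (hw : IsQValuation K w) : AddValuation K (WithTop ℚ) :=
  AddValuation.of w hw.map_zero hw.map_one hw.min_le_map_add hw.map_mul

theorem exists_pow_eq_algebraMap_of_mem_stdGroup {p : ℕ} (hp : p.Prime) {F E : Type*}
    [Field F] [Field E] [Algebra F E] {e : ℕ} (he : ¬ p ∣ e) {πF : F} {πE : Eˣ} {zE : E}
    (hzE : IsPrimeToRootOfUnity p zE) (hπzE : (πE : E) ^ e * zE = algebraMap F E πF)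
    {s : Eˣ} (hs : s ∈ stdGroup p πE) :
    ∃ N : ℕ, ¬ p ∣ N ∧ ∃ y : F, (s : E) ^ N = algebraMap F E y := by
  induction hs using Subgroup.closure_induction with
  | mem x hx =>
    rcases hx with rfl | ⟨n, -, hpn, hxn⟩
    · obtain ⟨n, -, hpn, hzn⟩ := hzE
      refine ⟨e * n, fun h => (hp.dvd_mul.mp h).elim he hpn, πF ^ n, ?_⟩
      rw [map_pow, ← hπzE, mul_pow, hzn, mul_one, pow_mul]
    · exact ⟨n, hpn, 1, by rw [hxn, map_one]⟩
  | one => exact ⟨1, hp.not_dvd_one, 1, by simp⟩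
  | mul x y _ _ hx hy =>
    obtain ⟨N, hpN, a, ha⟩ := hx
    obtain ⟨M, hpM, b, hb⟩ := hy
    refine ⟨N * M, fun h => (hp.dvd_mul.mp h).elim hpN hpM, a ^ M * b ^ N, ?_⟩
    rw [Units.val_mul, mul_pow, pow_mul, pow_mul', ha, hb, map_mul, map_pow, map_pow]
  | inv x _ hx =>
    obtain ⟨N, hpN, a, ha⟩ := hx
    exact ⟨N, hpN, a⁻¹, by rw [Units.val_inv_eq_inv_val, inv_pow, ha, map_inv₀]⟩

theorem map_algHom_eq_div_of_pow_eq_algebraMap {F E L : Type*} [Field F] [Field E] [Field L]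
    [Algebra F E] [Algebra F L] (vF : F → WithTop ℤ) (vE : AddValuation E (WithTop ℤ))
    (w : AddValuation L (WithTop ℚ)) {e : ℕ} (he : e ≠ 0)
    (hcomp : ∀ y : F, vE (algebraMap F E y) = e • vF y)
    (hext : ∀ y : F, w (algebraMap F L y) = WithTop.map (fun n : ℤ => (n : ℚ)) (vF y))
    (σ : E →ₐ[F] L) {x : E} (hx : x ≠ 0) {N : ℕ} (hN : N ≠ 0) {y : F}
    (hy : x ^ N = algebraMap F E y) {m : ℤ} (hm : vE x = m) :
    w (σ x) = ((m / e : ℚ) : WithTop ℚ) := by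
  have hvE := hcomp y
  rw [← hy, vE.map_pow, hm, ← WithTop.coe_nsmul] at hvE
  obtain ⟨k, hk⟩ : ∃ k : ℤ, vF y = k := by
    cases h : vF y with
    | top =>
      obtain ⟨d, rfl⟩ := Nat.exists_eq_succ_of_ne_zero he
      rw [h, succ_nsmul, WithTop.add_top] at hvE
      exact absurd hvE WithTop.coe_ne_top
    | coe k => exact ⟨k, rfl⟩
  rw [hk, ← WithTop.coe_nsmul, WithTop.coe_inj] at hvE
  obtain ⟨q, hq⟩ := WithTop.ne_top_iff_exists.mp (w.ne_top_iff.mpr ((map_ne_zero σ).mpr hx))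
  have hw := hext y
  rw [← σ.commutes, ← hy, map_pow, w.map_pow, ← hq, hk, WithTop.map_coe, ← WithTop.coe_nsmul,
    WithTop.coe_inj, nsmul_eq_mul] at hw
  rw [← hq, WithTop.coe_inj, eq_div_iff (by exact_mod_cast he)]
  have hvE' : (N : ℚ) * m = e * k := by exact_mod_cast hvE
  refine mul_left_cancel₀ (Nat.cast_ne_zero.mpr hN : (N : ℚ) ≠ 0) ?_
  linear_combination (e : ℚ) * hw - hvE'

theorem ord_sub_embeddings_of_mem_stdGroup_general
    (p : ℕ) (F E : Type*) [Field F] [Field E] [Algebra F E]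
    (vF : F → WithTop ℤ) (vE : E → WithTop ℤ)
    (hF : IsNonarchLocalField F vF p) (hE : IsNonarchLocalField E vE p)
    (e : ℕ) (hcomp : ∀ x : F, vE (algebraMap F E x) = e • vF x)
    (htame : ¬ p ∣ e)
    (πF : F)
    (πE : Eˣ)
    (zE : E) (hzE : IsPrimeToRootOfUnity p zE)
    (hπzE : (πE : E) ^ e * zE = algebraMap F E πF)
    (ord : AlgebraicClosure F → WithTop ℚ) (hord : IsQValuation (AlgebraicClosure F) ord)
    (hordext : ∀ x : F,
      ord (algebraMap F (AlgebraicClosure F) x) = WithTop.map (fun n : ℤ => (n : ℚ)) (vF x))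
    (s : Eˣ) (hs : s ∈ stdGroup p πE)
    (m : ℤ) (hm : vE ↑s = (m : WithTop ℤ))
    (σ₁ σ₂ : E →ₐ[F] AlgebraicClosure F)
    (hne : σ₁ ↑s ≠ σ₂ ↑s) :
    ord (σ₁ ↑s - σ₂ ↑s) = (((m : ℚ) / (e : ℚ) : ℚ) : WithTop ℚ) := by
  obtain ⟨N, hpN, y, hy⟩ := exists_pow_eq_algebraMap_of_mem_stdGroup hE.prime htame hzE hπzE hs
  have hσ (σ : E →ₐ[F] AlgebraicClosure F) : σ s ^ N = algebraMap F _ y := by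
    rw [← map_pow, hy, σ.commutes]
  have hs₂ : σ₂ s ≠ 0 := (map_ne_zero σ₂).mpr s.ne_zero
  have hu : σ₁ s / σ₂ s ≠ 1 := fun h => hne ((div_eq_one_iff_eq hs₂).mp h)
  have huN : (σ₁ s / σ₂ s) ^ N = 1 := by
    rw [div_pow, hσ σ₁, ← hσ σ₂, div_self (pow_ne_zero N hs₂)]
  have hord_p : 0 < ord p := by
    rw [← map_natCast (algebraMap F (AlgebraicClosure F)), hordext]
    cases h : vF p with
    | top => simp
    | coe k => simpa [h] using hF.v_p_pos
  have hord_u : ord (σ₁ s / σ₂ s - 1) = 0 :=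
    hord.toAddValuation.map_sub_one_eq_zero_of_pow_eq_one hE.prime hord_p hpN huN hu
  have hord_s : ord (σ₂ s) = ((m / e : ℚ) : WithTop ℚ) :=
    map_algHom_eq_div_of_pow_eq_algebraMap vF hE.isZValuation.toAddValuation hord.toAddValuation
      (by rintro rfl; exact htame (dvd_zero p)) hcomp hordext σ₂ s.ne_zero
      (by rintro rfl; exact hpN (dvd_zero p)) hy hm
  rw [show σ₁ s - σ₂ s = σ₂ s * (σ₁ s / σ₂ s - 1) by field_simp, hord.map_mul, hord_s, hord_u,
    add_zero]

/-- Let `E/F` be a finite tamely ramified extension of nonarchimedean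
local fields, `s ∈ C_E` (with `v_E s = m`, so that `ord s = m / e`), and let
`σ₁, σ₂ : E → F̄` be `F`-algebra embeddings into an algebraic closure of `F` with
`σ₁ s ≠ σ₂ s`. Then `ord (σ₁ s - σ₂ s) = ord s = m / e`, where `ord` is the unique
extension of `v_F` to a `ℚ`-valued valuation of `F̄`. -/
theorem ord_sub_embeddings_of_mem_stdGroup
    (p : ℕ) (F E : Type*) [Field F] [Field E] [Algebra F E] [FiniteDimensional F E]
    (vF : F → WithTop ℤ) (vE : E → WithTop ℤ)
    (hF : IsNonarchLocalField F vF p) (hE : IsNonarchLocalField E vE p)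
    (e : ℕ) (hcomp : ∀ x : F, vE (algebraMap F E x) = e • vF x)
    (htame : ¬ p ∣ e)
    (πF : F) (hπF : vF πF = 1)
    (πE : Eˣ) (hπE : vE ↑πE = 1)
    (zE : E) (hzE : IsPrimeToRootOfUnity p zE)
    (hπzE : (πE : E) ^ e * zE = algebraMap F E πF)
    (ord : AlgebraicClosure F → WithTop ℚ) (hord : IsQValuation (AlgebraicClosure F) ord)
    (hordext : ∀ x : F,
      ord (algebraMap F (AlgebraicClosure F) x) = WithTop.map (fun n : ℤ => (n : ℚ)) (vF x))
    (s : Eˣ) (hs : s ∈ stdGroup p πE)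
    (m : ℤ) (hm : vE ↑s = (m : WithTop ℤ))
    (σ₁ σ₂ : E →ₐ[F] AlgebraicClosure F)
    (hne : σ₁ ↑s ≠ σ₂ ↑s) :
    ord (σ₁ ↑s - σ₂ ↑s) = (((m : ℚ) / (e : ℚ) : ℚ) : WithTop ℚ) :=
  ord_sub_embeddings_of_mem_stdGroup_general p F E vF vE hF hE e hcomp htame πF πE zE hzE hπzE ord
    hord hordext s hs m hm σ₁ σ₂ hne
end

section
/- Let E/F be a finite tamely ramified extension of nonarchimedean local fields and let c, c' ∈ E^× with c^{−1}c' ∈ 1 + p_E. If E = F[c] and c is minimal over F, then E = F[c'] and c' is minimal over F. (In particular, c is minimal relative to E/F if and only if c' is.) -/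
/-- The residue class of `y` generates the residue field extension `k_E / k_F`:
every integer of `E` is congruent, modulo the maximal ideal of `E`, to a polynomial in
`y` whose coefficients are integers of `F`. -/
def ResidueGenerates (F E : Type*) [Field F] [Field E] [Algebra F E]
    (vF : F → WithTop ℤ) (vE : E → WithTop ℤ) (y : E) : Prop :=
  ∀ x : E, 0 ≤ vE x → ∃ Q : Polynomial F,
    (∀ n : ℕ, 0 ≤ vF (Q.coeff n)) ∧ 0 < vE (x - Polynomial.aeval y Q)

namespace AddValuation

section CommRing

variable {R Γ₀ : Type*} [CommRing R] [LinearOrderedAddCommMonoidWithTop Γ₀]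
  (v : AddValuation R Γ₀)

theorem map_sub_le_map_pow_sub_pow {a b : R} (ha : 0 ≤ v a) (hb : 0 ≤ v b) (n : ℕ) :
    v (a - b) ≤ v (a ^ n - b ^ n) := by
  rw [← geom_sum₂_mul, v.map_mul]
  refine le_add_of_nonneg_left (v.map_le_sum fun i _ => ?_)
  rw [v.map_mul, v.map_pow, v.map_pow]
  exact add_nonneg (nsmul_nonneg ha _) (nsmul_nonneg hb _)

theorem map_sub_le_map_aeval_sub {S : Type*} [CommRing S] [Algebra S R] {a b : R}
    (ha : 0 ≤ v a) (hb : 0 ≤ v b) (Q : Polynomial S)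
    (hQ : ∀ n, 0 ≤ v (algebraMap S R (Q.coeff n))) :
    v (a - b) ≤ v (Polynomial.aeval a Q - Polynomial.aeval b Q) := by
  rw [Polynomial.aeval_eq_sum_range, Polynomial.aeval_eq_sum_range, ← Finset.sum_sub_distrib]
  refine v.map_le_sum fun i _ => ?_
  rw [← smul_sub, Algebra.smul_def, v.map_mul]
  exact le_add_of_nonneg_of_le (hQ i) (v.map_sub_le_map_pow_sub_pow ha hb i)

end CommRing

variable {K : Type*} [Field K] (v : AddValuation K (WithTop ℤ)) {ρ : ℝ}

theorem exists_eq_coe {x : K} (hx : x ≠ 0) : ∃ n : ℤ, v x = n :=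
  (WithTop.ne_top_iff_exists.mp (v.ne_top_iff.mpr hx)).imp fun _ h => h.symm

theorem map_zpow_of_eq {x : K} {a : ℤ} (h : v x = a) (n : ℤ) :
    v (x ^ n) = ((n * a : ℤ) : WithTop ℤ) := by
  obtain ⟨k, rfl | rfl⟩ := n.eq_nat_or_neg
  · rw [zpow_natCast, v.map_pow, h, ← WithTop.coe_nsmul, nsmul_eq_mul]
  · rw [zpow_neg, zpow_natCast, v.map_inv, v.map_pow, h, ← WithTop.coe_nsmul, nsmul_eq_mul,
      ← WithTop.LinearOrderedAddCommGroup.coe_neg, neg_mul]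

theorem exists_mem_le_map_sub {S : Type*} [SetLike S K] [AddSubmonoidClass S K] {V : S}
    (hstep : ∀ x, ∃ g ∈ V, v x + 1 ≤ v (x - g)) (x : K) (N : ℤ) :
    ∃ g ∈ V, (N : WithTop ℤ) ≤ v (x - g) := by
  rcases eq_or_ne x 0 with rfl | hx
  · exact ⟨0, zero_mem V, by simp⟩
  obtain ⟨n, hn⟩ := v.exists_eq_coe hx
  suffices h : ∀ k : ℕ, ∃ g ∈ V, ((n + k : ℤ) : WithTop ℤ) ≤ v (x - g) by
    obtain ⟨g, hg, hle⟩ := h (N - n).toNat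
    exact ⟨g, hg, le_trans (WithTop.coe_le_coe.mpr (by omega)) hle⟩
  intro k
  induction k with
  | zero => exact ⟨0, zero_mem V, by simp [hn]⟩
  | succ k ih =>
    obtain ⟨g, hg, hle⟩ := ih
    obtain ⟨g', hg', hle'⟩ := hstep (x - g)
    refine ⟨g + g', add_mem hg hg', ?_⟩
    calc ((n + (k + 1 : ℕ) : ℤ) : WithTop ℤ) = ((n + k : ℤ) : WithTop ℤ) + 1 := by
          push_cast; rw [add_assoc]
      _ ≤ v (x - g) + 1 := by gcongr
      _ ≤ v (x - (g + g')) := by rwa [← sub_sub]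

open Classical in
noncomputable def zpowNorm (ρ : ℝ) (x : K) : ℝ :=
  if x = 0 then 0 else ρ ^ (v x).untopD 0

theorem zpowNorm_zero : v.zpowNorm ρ 0 = 0 := if_pos rfl

theorem zpowNorm_of_eq {x : K} {n : ℤ} (h : v x = n) : v.zpowNorm ρ x = ρ ^ n := by
  rw [zpowNorm, if_neg ((v.ne_top_iff).mp (h ▸ WithTop.coe_ne_top)), h, WithTop.untopD_coe]

theorem zpowNorm_le_zpow_iff (hρ0 : 0 < ρ) (hρ1 : ρ < 1) {x : K} {N : ℤ} :
    v.zpowNorm ρ x ≤ ρ ^ N ↔ (N : WithTop ℤ) ≤ v x := by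
  rcases eq_or_ne x 0 with rfl | hx
  · simp [zpowNorm_zero, (zpow_pos hρ0 N).le]
  obtain ⟨n, hn⟩ := v.exists_eq_coe hx
  rw [v.zpowNorm_of_eq hn, hn, WithTop.coe_le_coe, zpow_le_zpow_iff_right_of_lt_one₀ hρ0 hρ1]

noncomputable def zpowAbv (hρ0 : 0 < ρ) (hρ1 : ρ < 1) : AbsoluteValue K ℝ where
  toFun := v.zpowNorm ρ
  map_mul' x y := by
    rcases eq_or_ne x 0 with rfl | hx
    · simp [zpowNorm_zero]
    rcases eq_or_ne y 0 with rfl | hy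
    · simp [zpowNorm_zero]
    obtain ⟨a, ha⟩ := v.exists_eq_coe hx
    obtain ⟨b, hb⟩ := v.exists_eq_coe hy
    rw [v.zpowNorm_of_eq (n := a + b) (by rw [v.map_mul, ha, hb, WithTop.coe_add]),
      v.zpowNorm_of_eq ha, v.zpowNorm_of_eq hb, zpow_add₀ hρ0.ne']
  nonneg' x := by
    unfold zpowNorm
    split_ifs
    exacts [le_rfl, (zpow_pos hρ0 _).le]
  eq_zero' x := by
    refine ⟨fun h => by_contra fun hx => ?_, fun h => h ▸ v.zpowNorm_zero⟩
    obtain ⟨n, hn⟩ := v.exists_eq_coe hx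
    exact (zpow_pos hρ0 n).ne' (v.zpowNorm_of_eq hn ▸ h)
  add_le' x y := by
    rcases eq_or_ne x 0 with rfl | hx
    · simp [zpowNorm_zero]
    rcases eq_or_ne y 0 with rfl | hy
    · simp [zpowNorm_zero]
    obtain ⟨a, ha⟩ := v.exists_eq_coe hx
    obtain ⟨b, hb⟩ := v.exists_eq_coe hy
    have hmin : v.zpowNorm ρ (x + y) ≤ ρ ^ min a b := by
      rw [v.zpowNorm_le_zpow_iff hρ0 hρ1, WithTop.coe_min, ← ha, ← hb]
      exact v.map_add x y
    rw [v.zpowNorm_of_eq ha, v.zpowNorm_of_eq hb]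
    rcases min_choice a b with h | h <;> rw [h] at hmin
    · linarith [zpow_pos hρ0 b]
    · linarith [zpow_pos hρ0 a]

theorem zpowNorm_algebraMap {F : Type*} [Field F] [Algebra F K] {w : AddValuation F (WithTop ℤ)}
    {e : ℕ} (hcomp : ∀ a : F, v (algebraMap F K a) = e • w a) (a : F) :
    v.zpowNorm ρ (algebraMap F K a) = w.zpowNorm (ρ ^ e) a := by
  rcases eq_or_ne a 0 with rfl | ha
  · rw [(algebraMap F K).map_zero, zpowNorm_zero, zpowNorm_zero]
  obtain ⟨n, hn⟩ := w.exists_eq_coe ha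
  rw [w.zpowNorm_of_eq hn, v.zpowNorm_of_eq (n := e * n), ← zpow_natCast, ← zpow_mul]
  rw [hcomp, hn, ← WithTop.coe_nsmul, nsmul_eq_mul]

end AddValuation

namespace IsNonarchLocalField

theorem completeSpace {p : ℕ} {K : Type*} [Field K] {v : AddValuation K (WithTop ℤ)}
    (hK : IsNonarchLocalField K v p) {ρ : ℝ} (hρ0 : 0 < ρ) (hρ1 : ρ < 1) :
    letI := (v.zpowAbv hρ0 hρ1).toNormedField
    CompleteSpace K := by
  let := (v.zpowAbv hρ0 hρ1).toNormedField
  have hle {x : K} {N : ℤ} : ‖x‖ ≤ ρ ^ N ↔ (N : WithTop ℤ) ≤ v x :=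
    v.zpowNorm_le_zpow_iff hρ0 hρ1
  refine Metric.complete_of_cauchySeq_tendsto fun f hf => ?_
  obtain ⟨L, hL⟩ := hK.complete f fun N => by
    obtain ⟨M, hM⟩ := Metric.cauchySeq_iff.mp hf (ρ ^ N) (zpow_pos hρ0 N)
    exact ⟨M, fun m hm n hn => hle.mp (dist_eq_norm (f m) (f n) ▸ (hM m hm n hn).le)⟩
  refine ⟨L, Metric.tendsto_atTop.mpr fun ε hε => ?_⟩
  obtain ⟨k, hk⟩ := exists_pow_lt_of_lt_one hε hρ1
  obtain ⟨M, hM⟩ := hL k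
  refine ⟨M, fun n hn => lt_of_le_of_lt ?_ hk⟩
  rw [dist_eq_norm, ← zpow_natCast]
  exact hle.mpr (hM n hn)

/-- Finite-dimensional subspaces over the complete field `F` are closed. -/
theorem mem_of_forall_exists_le_map_sub {p : ℕ} {F E : Type*} [Field F] [Field E]
    [Algebra F E] {wF : AddValuation F (WithTop ℤ)} {wE : AddValuation E (WithTop ℤ)}
    (hF : IsNonarchLocalField F wF p) {e : ℕ} (he : e ≠ 0)
    (hcomp : ∀ a : F, wE (algebraMap F E a) = e • wF a)
    (V : Submodule F E) [FiniteDimensional F V] {x : E}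
    (hx : ∀ N : ℤ, ∃ g ∈ V, (N : WithTop ℤ) ≤ wE (x - g)) : x ∈ V := by
  have hρ0 : (0 : ℝ) < 2⁻¹ := by norm_num
  have hρ1 : (2⁻¹ : ℝ) < 1 := by norm_num
  have hρe0 : (0 : ℝ) < 2⁻¹ ^ e := pow_pos hρ0 e
  have hρe1 : (2⁻¹ : ℝ) ^ e < 1 := pow_lt_one₀ hρ0.le hρ1 he
  let := (wE.zpowAbv hρ0 hρ1).toNormedField
  let nF := (wF.zpowAbv hρe0 hρe1).toNormedField
  have := hF.completeSpace hρe0 hρe1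
  obtain ⟨a, ha⟩ := hF.isZValuation.surjective (-1)
  let : NontriviallyNormedField F :=
    { nF with
      non_trivial := ⟨a, show 1 < wF.zpowNorm _ a by
        rw [wF.zpowNorm_of_eq ha]; exact one_lt_zpow_of_neg₀ hρe0 hρe1 (by norm_num)⟩ }
  let : NormedSpace F E := ⟨fun a x => by
    rw [Algebra.smul_def, norm_mul]
    exact (congrArg (· * ‖x‖) (wE.zpowNorm_algebraMap hcomp a)).le⟩
  rw [← SetLike.mem_coe, ← V.closed_of_finiteDimensional.closure_eq, Metric.mem_closure_iff]
  intro ε hε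
  obtain ⟨N, hN⟩ := exists_pow_lt_of_lt_one hε hρ1
  obtain ⟨g, hg, hle⟩ := hx N
  refine ⟨g, hg, lt_of_le_of_lt ?_ hN⟩
  rw [dist_eq_norm, ← zpow_natCast]
  exact (wE.zpowNorm_le_zpow_iff hρ0 hρ1).mpr hle

end IsNonarchLocalField

theorem Int.withTop_one_le_of_pos {t : WithTop ℤ} (ht : 0 < t) : 1 ≤ t := by
  induction t using WithTop.recTopCoe with
  | top => exact le_top
  | coe k => exact WithTop.coe_le_coe.mpr (WithTop.coe_lt_coe.mp ht)

section Extension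

variable {F E : Type*} [Field F] [Field E] [Algebra F E]
  {wF : AddValuation F (WithTop ℤ)} {wE : AddValuation E (WithTop ℤ)}

theorem ResidueGenerates.mul_pow (hint : ∀ a : F, 0 ≤ wF a → 0 ≤ wE (algebraMap F E a))
    {y : E} (h : ResidueGenerates F E wF wE y) (hy : 0 ≤ wE y) {u : E} (hu : 0 < wE (u - 1))
    (n : ℕ) : ResidueGenerates F E wF wE (y * u ^ n) := by
  have hu0 : wE u = 0 := by simpa using wE.map_eq_of_lt_sub (x := 1) (by simpa using hu)
  have hun : 0 < wE (1 - u ^ n) := by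
    rw [wE.map_sub_swap, ← one_pow n]
    exact hu.trans_le (wE.map_sub_le_map_pow_sub_pow hu0.ge wE.map_one.ge n)
  intro x hx
  obtain ⟨Q, hQ, hxQ⟩ := h x hx
  refine ⟨Q, hQ, ?_⟩
  have hclose : 0 < wE (Polynomial.aeval y Q - Polynomial.aeval (y * u ^ n) Q) := by
    refine lt_of_lt_of_le ?_ (wE.map_sub_le_map_aeval_sub hy ?_ Q fun i => hint _ (hQ i))
    · rw [← mul_one_sub, wE.map_mul]
      exact lt_add_of_nonneg_of_lt hy hun
    · rw [wE.map_mul, wE.map_pow, hu0, nsmul_zero, add_zero]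
      exact hy
  rw [← sub_add_sub_cancel _ (Polynomial.aeval y Q)]
  exact wE.map_lt_add hxQ hclose

theorem exists_mem_add_one_le_map_sub {A : Subalgebra F E} {y : E} (hyA : y ∈ A)
    (hy : ResidueGenerates F E wF wE y) (hval : ∀ n : ℤ, ∃ z ∈ A, wE z = n) (x : E) :
    ∃ g ∈ A, wE x + 1 ≤ wE (x - g) := by
  rcases eq_or_ne x 0 with rfl | hx
  · exact ⟨0, A.zero_mem, by simp⟩
  obtain ⟨n, hn⟩ := wE.exists_eq_coe hx
  obtain ⟨z, hzA, hz⟩ := hval n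
  have hz0 : z ≠ 0 := (wE.ne_top_iff).mp (hz ▸ WithTop.coe_ne_top)
  obtain ⟨Q, -, hQ⟩ := hy (x * z⁻¹) (by rw [wE.map_mul, wE.map_inv, hn, hz]; simp)
  have hQA : Polynomial.aeval y Q ∈ A := Algebra.adjoin_le
    (Set.singleton_subset_iff.mpr hyA) (Polynomial.aeval_mem_adjoin_singleton F y)
  refine ⟨z * Polynomial.aeval y Q, A.mul_mem hzA hQA, ?_⟩
  rw [show x - z * Polynomial.aeval y Q = z * (x * z⁻¹ - Polynomial.aeval y Q) by field_simp,
    wE.map_mul, hz, hn]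
  exact add_le_add_right (Int.withTop_one_le_of_pos hQ) _

theorem map_algebraMap_zpow {e : ℕ} (hcomp : ∀ a : F, wE (algebraMap F E a) = e • wF a)
    {π : F} (hπ : wF π = 1) (l : ℤ) : wE (algebraMap F E π ^ l) = ((l * e : ℤ) : WithTop ℤ) :=
  wE.map_zpow_of_eq (by rw [hcomp, hπ, nsmul_one]; rfl) l

theorem exists_mem_adjoin_map_eq {e : ℕ} (he : e ≠ 0)
    (hcomp : ∀ a : F, wE (algebraMap F E a) = e • wF a) {π : F} (hπ : wF π = 1) {c : E}
    {m : ℤ} (hc : wE c = m) (hcop : Int.gcd m e = 1) (n : ℤ) :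
    ∃ z ∈ Algebra.adjoin F {c}, wE z = n := by
  obtain ⟨s, t, hst⟩ : IsCoprime m e := Int.isCoprime_iff_gcd_eq_one.mpr hcop
  -- write `n = k * m + l * e` with `k ≥ 0`: negative powers of `c` are not visibly in `F[c]`
  obtain ⟨k, hk_def⟩ : ∃ k, k = n * s % e := ⟨_, rfl⟩
  have hk : 0 ≤ k := hk_def ▸ Int.emod_nonneg _ (by exact_mod_cast he)
  obtain ⟨l, hl_def⟩ : ∃ l, l = n * t + n * s / e * m := ⟨_, rfl⟩
  have hkl : k * m + l * e = n := by
    rw [hk_def, hl_def, Int.emod_def]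
    linear_combination n * hst
  refine ⟨algebraMap F E π ^ l * c ^ k.toNat, Subalgebra.mul_mem _ ?_ ?_, ?_⟩
  · exact map_zpow₀ (algebraMap F E) π l ▸ Subalgebra.algebraMap_mem _ _
  · exact Subalgebra.pow_mem _ (Algebra.self_mem_adjoin_singleton F c) _
  rw [wE.map_mul, map_algebraMap_zpow hcomp hπ, wE.map_pow, hc, ← WithTop.coe_nsmul,
    ← WithTop.coe_add, nsmul_eq_mul, Int.toNat_of_nonneg hk, ← hkl, add_comm]

theorem adjoin_eq_top_of_residueGenerates [FiniteDimensional F E] {p : ℕ}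
    (hF : IsNonarchLocalField F wF p) {e : ℕ} (he : e ≠ 0)
    (hcomp : ∀ a : F, wE (algebraMap F E a) = e • wF a) {π : F} (hπ : wF π = 1) {c : E}
    {m : ℤ} (hc : wE c = m) (hcop : Int.gcd m e = 1)
    (hres : ResidueGenerates F E wF wE (algebraMap F E π ^ (-m) * c ^ e)) :
    Algebra.adjoin F {c} = ⊤ := by
  set A := Algebra.adjoin F {c}
  have hyA : algebraMap F E π ^ (-m) * c ^ e ∈ A :=
    A.mul_mem (map_zpow₀ (algebraMap F E) π (-m) ▸ A.algebraMap_mem _)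
      (A.pow_mem (Algebra.self_mem_adjoin_singleton F c) e)
  have hstep :=
    exists_mem_add_one_le_map_sub hyA hres (exists_mem_adjoin_map_eq he hcomp hπ hc hcop)
  exact Algebra.eq_top_iff.mpr fun x => hF.mem_of_forall_exists_le_map_sub he hcomp
    (Subalgebra.toSubmodule A) (wE.exists_mem_le_map_sub hstep x)

end Extension

theorem minimal_of_mul_one_add_maximalIdeal_general
    (p : ℕ) (F E : Type*) [Field F] [Field E] [Algebra F E] [FiniteDimensional F E]
    (vF : F → WithTop ℤ) (vE : E → WithTop ℤ)
    (hF : IsNonarchLocalField F vF p) (hE : IsNonarchLocalField E vE p)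
    (e : ℕ) (hcomp : ∀ x : F, vE (algebraMap F E x) = e • vF x)
    (πF : F) (hπF : vF πF = 1)
    (c c' : Eˣ) (hcc' : 0 < vE ((↑(c⁻¹ * c') : E) - 1))
    (m : ℤ) (hm : vE ↑c = (m : WithTop ℤ))
    (hmin : Int.gcd m (e : ℤ) = 1 ∧
      ResidueGenerates F E vF vE (algebraMap F E πF ^ (-m) * (c : E) ^ e)) :
    Algebra.adjoin F {(c' : E)} = ⊤ ∧
      ∃ m' : ℤ, vE ↑c' = (m' : WithTop ℤ) ∧ Int.gcd m' (e : ℤ) = 1 ∧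
        ResidueGenerates F E vF vE (algebraMap F E πF ^ (-m') * (c' : E) ^ e) := by
  obtain ⟨hcop, hres⟩ := hmin
  obtain ⟨wE, rfl⟩ : ∃ w : AddValuation E (WithTop ℤ), ⇑w = vE :=
    ⟨hE.isZValuation.toAddValuation, rfl⟩
  obtain ⟨wF, rfl⟩ : ∃ w : AddValuation F (WithTop ℤ), ⇑w = vF :=
    ⟨hF.isZValuation.toAddValuation, rfl⟩
  have he : e ≠ 0 := by
    rintro rfl
    have h := hE.v_p_pos
    rw [← map_natCast (algebraMap F E), hcomp, zero_nsmul] at h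
    exact lt_irrefl _ h
  set u : E := ↑(c⁻¹ * c')
  have hc'u : (c' : E) = c * u := by simp [u]
  have hu : wE u = 0 := by simpa using wE.map_eq_of_lt_sub (x := 1) (by simpa using hcc')
  have hc' : wE c' = m := by rw [hc'u, wE.map_mul, hm, hu, add_zero]
  have hy : wE (algebraMap F E πF ^ (-m) * (c : E) ^ e) = 0 := by
    rw [wE.map_mul, map_algebraMap_zpow hcomp hπF, wE.map_pow, hm, ← WithTop.coe_nsmul,
      ← WithTop.coe_add, nsmul_eq_mul, WithTop.coe_eq_zero]
    ring
  have hres' : ResidueGenerates F E wF wE (algebraMap F E πF ^ (-m) * (c' : E) ^ e) := by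
    rw [hc'u, mul_pow, ← mul_assoc]
    exact hres.mul_pow (fun a ha => hcomp a ▸ nsmul_nonneg ha e) hy.ge hcc' e
  exact ⟨adjoin_eq_top_of_residueGenerates hF he hcomp hπF hc' hcop hres',
    m, hc', hcop, hres'⟩

/-- If `E/F` is a finite tamely ramified extension of nonarchimedean
local fields, `c, c' ∈ Eˣ` with `c⁻¹ * c' ∈ 1 + p_E`, and `c` generates `E` over `F` and is
minimal over `F`, then `c'` also generates `E` over `F` and is minimal over `F`. -/
theorem minimal_of_mul_one_add_maximalIdeal
    (p : ℕ) (F E : Type*) [Field F] [Field E] [Algebra F E] [FiniteDimensional F E]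
    (vF : F → WithTop ℤ) (vE : E → WithTop ℤ)
    (hF : IsNonarchLocalField F vF p) (hE : IsNonarchLocalField E vE p)
    (e : ℕ) (hcomp : ∀ x : F, vE (algebraMap F E x) = e • vF x)
    (htame : ¬ p ∣ e)
    (πF : F) (hπF : vF πF = 1)
    (c c' : Eˣ) (hcc' : 0 < vE ((↑(c⁻¹ * c') : E) - 1))
    (hgen : Algebra.adjoin F {(c : E)} = ⊤)
    (m : ℤ) (hm : vE ↑c = (m : WithTop ℤ))
    (hmin : Int.gcd m (e : ℤ) = 1 ∧
      ResidueGenerates F E vF vE (algebraMap F E πF ^ (-m) * (c : E) ^ e)) :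
    Algebra.adjoin F {(c' : E)} = ⊤ ∧
      ∃ m' : ℤ, vE ↑c' = (m' : WithTop ℤ) ∧ Int.gcd m' (e : ℤ) = 1 ∧
        ResidueGenerates F E vF vE (algebraMap F E πF ^ (-m') * (c' : E) ^ e) :=
  minimal_of_mul_one_add_maximalIdeal_general p F E vF vE hF hE e hcomp πF hπF c c' hcc' m hm hmin
end

section
/- Let Ĵ be a group, J a normal subgroup of Ĵ, and g ∈ Ĵ such that the map ℤ → Ĵ/J, l ↦ g^l J, is a group isomorphism (so every element of Ĵ is uniquely of the form g^l u with l ∈ ℤ and u ∈ J). Let κ : J → GL(V) be a representation of J on a complex vector space V such that the conjugate representation ^gκ, defined by ^gκ(u) = κ(g^{−1} u g), is isomorphic to κ, and fix a linear automorphism f of V with f ∘ κ(g^{−1} u g) = κ(u) ∘ f for all u ∈ J. Then the map κ̂ : Ĵ → GL(V) defined by κ̂(g^l u) = f^l ∘ κ(u) for l ∈ ℤ and u ∈ J is a well-defined group homomorphism whose restriction to J equals κ; in particular, κ extends to a representation of Ĵ. -/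
/-!
Because `l ↦ g ^ l J` is an isomorphism `ℤ ≃ Ĵ ⧸ J`, the map `(u, l) ↦ u * g ^ l` identifies
`J ⋊ ℤ`, with `ℤ` acting on `J` by conjugation by powers of `g`, with `Ĵ`. A homomorphism
out of `J ⋊ ℤ` is a pair of homomorphisms compatible with the action; the intertwining
relation for `f` is this compatibility for the generator of `ℤ`, hence for all of `ℤ`, so
`κ` and `l ↦ f ^ l` glue to `κ̂`.
-/

open Function SemidirectProduct

theorem MonoidHom.map_zpow_apply_eq_conj {N H : Type*} [MulOneClass N] [Group H]
    (κ : N →* H) {σ : MulAut N} {f : H} (h : ∀ n, f * κ (σ⁻¹ n) = κ n * f) (l : ℤ) (n : N) :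
    κ ((σ ^ l) n) = MulAut.conj (f ^ l) (κ n) := by
  rw [MulAut.conj_apply]
  have h_fwd : ∀ n, κ (σ n) = f * κ n * f⁻¹ := fun n => by
    rw [eq_mul_inv_iff_mul_eq, ← h, MulAut.inv_apply_self]
  have h_inv : ∀ n, κ (σ⁻¹ n) = f⁻¹ * κ n * f := fun n => by
    rw [mul_assoc, ← h, inv_mul_cancel_left]
  induction l using Int.induction_on generalizing n with
  | zero => simp
  | succ l ih => rw [zpow_add_one, MulAut.mul_apply, ih, h_fwd]; group
  | pred l ih => rw [zpow_sub_one, MulAut.mul_apply, ih, h_inv]; group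

section

variable {G : Type*} [Group G] (N : Subgroup G) [N.Normal] (g : G)

abbrev conjZPowers : Multiplicative ℤ →* MulAut N := zpowersHom _ (MulAut.conjNormal g)

def semidirectProductZPowersHom : N ⋊[conjZPowers N g] Multiplicative ℤ →* G :=
  lift N.subtype (zpowersHom G g) fun l => by
    ext n
    simp [← map_zpow, MulAut.conjNormal_apply]

theorem semidirectProductZPowersHom_apply (x : N ⋊[conjZPowers N g] Multiplicative ℤ) :
    semidirectProductZPowersHom N g x = x.left * g ^ x.right.toAdd := rfl

@[simp]
theorem semidirectProductZPowersHom_inl (n : N) :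
    semidirectProductZPowersHom N g (inl n) = n :=
  lift_inl ..

@[simp]
theorem semidirectProductZPowersHom_inr (l : Multiplicative ℤ) :
    semidirectProductZPowersHom N g (inr l) = g ^ l.toAdd :=
  lift_inr ..

variable {N g}

theorem semidirectProductZPowersHom_bijective
    (hg : Bijective fun l : ℤ => (QuotientGroup.mk (g ^ l) : G ⧸ N)) :
    Bijective (semidirectProductZPowersHom N g) := by
  refine ⟨(injective_iff_map_eq_one _).mpr fun ⟨n, l⟩ h => ?_, fun x => ?_⟩
  · rw [semidirectProductZPowersHom_apply] at h
    have hgl : g ^ l.toAdd = (n : G)⁻¹ := eq_inv_of_mul_eq_one_right h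
    have hl : l.toAdd = 0 := hg.1 <| by
      simp only [hgl, zpow_zero, QuotientGroup.mk_one, QuotientGroup.eq_one_iff]
      exact inv_mem n.2
    obtain rfl : l = 1 := hl
    ext <;> simp_all
  · obtain ⟨l, hl⟩ := hg.2 x
    exact ⟨⟨⟨x / g ^ l, QuotientGroup.eq_iff_div_mem.mp hl.symm⟩, .ofAdd l⟩, by
      simp [semidirectProductZPowersHom_apply]⟩

noncomputable def semidirectProductZPowersEquiv
    (hg : Bijective fun l : ℤ => (QuotientGroup.mk (g ^ l) : G ⧸ N)) :
    N ⋊[conjZPowers N g] Multiplicative ℤ ≃* G :=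
  MulEquiv.ofBijective _ (semidirectProductZPowersHom_bijective hg)

@[simp]
theorem semidirectProductZPowersEquiv_apply
    (hg : Bijective fun l : ℤ => (QuotientGroup.mk (g ^ l) : G ⧸ N))
    (x : N ⋊[conjZPowers N g] Multiplicative ℤ) :
    semidirectProductZPowersEquiv hg x = semidirectProductZPowersHom N g x :=
  rfl

end

/-- Let `Jhat` be a group, `J` a normal subgroup, and `g ∈ Jhat` such
that `l ↦ g ^ l • J` is a group isomorphism `ℤ ≃ Jhat ⧸ J`.  Let `κ : J → GL(V)` be a
representation on a complex vector space and `f` a linear automorphism of `V` with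
`f ∘ κ (g⁻¹ u g) = κ u ∘ f` for all `u ∈ J`.  Then `κhat (g ^ l * u) := f ^ l ∘ κ u`
defines a (well-defined) group homomorphism `Jhat → GL(V)` restricting to `κ` on `J`;
in particular `κ` extends to `Jhat`. -/
theorem exists_extension_of_representation_by_intertwiner
    (Jhat : Type*) [Group Jhat] (J : Subgroup Jhat) [hN : J.Normal] (g : Jhat)
    (hg : Function.Bijective fun l : ℤ => (QuotientGroup.mk (g ^ l) : Jhat ⧸ J))
    (V : Type*) [AddCommGroup V] [Module ℂ V]
    (κ : J →* (V ≃ₗ[ℂ] V)) (f : V ≃ₗ[ℂ] V)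
    (hf : ∀ (u : Jhat) (hu : u ∈ J) (v : V),
      f (κ ⟨g⁻¹ * u * g, by simpa using hN.conj_mem u hu g⁻¹⟩ v) = κ ⟨u, hu⟩ (f v)) :
    ∃ κhat : Jhat →* (V ≃ₗ[ℂ] V),
      (∀ (u : Jhat) (hu : u ∈ J), κhat u = κ ⟨u, hu⟩) ∧
      ∀ (l : ℤ) (u : Jhat) (hu : u ∈ J), κhat (g ^ l * u) = f ^ l * κ ⟨u, hu⟩ := by
  have hκ : ∀ n : J, f * κ ((MulAut.conjNormal g)⁻¹ n) = κ n * f := fun n => by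
    ext v
    show f (κ _ v) = κ n (f v)
    convert hf n n.2 v using 4
    exact Subtype.ext (MulAut.conjNormal_inv_apply g n)
  let e := semidirectProductZPowersEquiv hg
  let ρ : J ⋊[conjZPowers J g] Multiplicative ℤ →* (V ≃ₗ[ℂ] V) :=
    lift κ (zpowersHom _ f) fun l => by
      ext n : 1
      exact κ.map_zpow_apply_eq_conj hκ l.toAdd n
  refine ⟨ρ.comp e.symm.toMonoidHom, fun u hu => ?_, fun l u hu => ?_⟩
  · have he : e.symm u = inl ⟨u, hu⟩ := e.symm_apply_eq.mpr (by simp [e])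
    simp [he, ρ]
  · have he : e.symm (g ^ l * u) = inr (.ofAdd l) * inl ⟨u, hu⟩ :=
      e.symm_apply_eq.mpr (by simp [e])
    simp [he, ρ]
end

section
/- Let F be a nonarchimedean local field with ring of integers o_F and maximal ideal p_F, and let N ≥ 1 and e ≥ 1 be integers with e dividing N. For n ∈ ℤ, let 𝔓^n ⊆ M_N(F) be the o_F-lattice of matrices which, written as e×e block matrices with square blocks of size N/e, have all entries of the (i,j) block (1 ≤ i, j ≤ e) lying in p_F^{⌈(n + i − j)/e⌉}. Then for every integer n ≥ 1, the image of the set 1 + 𝔓^n = {1 + a : a ∈ 𝔓^n} under the determinant map det : GL_N(F) → F^× is exactly 1 + p_F^{⌈n/e⌉}; that is, det(1 + 𝔓^n) = 1 + p_F^{⌈n/e⌉}. -/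
/-- Membership in the lattice `𝔓^n`, where `𝔓` is the Jacobson radical of the standard
principal hereditary order of period `e` in `M_N(F)`: writing a matrix in `e × e` blocks
of square size `N/e` (blocks indexed from `0`), all entries of the `(i,j)` block have
valuation at least `⌈(n + i - j)/e⌉`. -/
def memRadicalPow {F : Type*} [Field F] (v : F → WithTop ℤ) (N e : ℕ) (n : ℤ)
    (A : Matrix (Fin N) (Fin N) F) : Prop :=
  ∀ a b : Fin N,
    ((Int.ceil (((n : ℚ) + (((a : ℕ) / (N / e) : ℕ) : ℚ) - (((b : ℕ) / (N / e) : ℕ) : ℚ)) / (e : ℚ))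
        : ℤ) : WithTop ℤ) ≤ v (A a b)

/-!
Expand `det (1 + A)` over permutations. The identity term is a product of elements
`1 + A i i` with `A i i ∈ 𝔭^⌈n/e⌉`, hence lies in `1 + 𝔭^⌈n/e⌉`. For `σ ≠ 1` the term has valuation
at least `∑ ⌈(n + β(σ i) - β i)/e⌉` over the points moved by `σ`, where `β` is the block index; the
`β`-terms telescope along `σ`, so this is at least `⌈#supp σ • n/e⌉ ≥ ⌈n/e⌉`. Conversely, every
`x ∈ 1 + 𝔭^⌈n/e⌉` is the determinant of `1 + (x - 1) E₀₀`, and `(x - 1) E₀₀ ∈ 𝔓^n`.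
-/

namespace IsZValuation

variable {K : Type*} [Field K] {v : K → WithTop ℤ}

def toAddValuation_s16 (hv : IsZValuation K v) : AddValuation K (WithTop ℤ) :=
  AddValuation.of v hv.map_zero hv.map_one hv.min_le_map_add hv.map_mul

@[simp]
lemma toAddValuation_apply (hv : IsZValuation K v) (x : K) : hv.toAddValuation_s16 x = v x := rfl

end IsZValuation

lemma Equiv.Perm.ceil_le_sum_support_ceil {ι : Type*} [Fintype ι] [DecidableEq ι]
    {σ : Equiv.Perm ι} (hσ : σ ≠ 1) (g : ι → ℚ) {q : ℚ} (hq : 0 ≤ q) :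
    ⌈q⌉ ≤ ∑ i ∈ σ.support, ⌈q + g (σ i) - g i⌉ := by
  have hcard : 1 ≤ σ.support.card :=
    Nat.one_le_iff_ne_zero.2 fun h => hσ (Equiv.Perm.card_support_eq_zero.1 h)
  calc ⌈q⌉ ≤ ⌈σ.support.card • q⌉ := Int.ceil_mono (le_smul_of_one_le_left hq hcard)
    _ = ⌈∑ i ∈ σ.support, (q + g (σ i) - g i)⌉ := by
      rw [Finset.sum_sub_distrib, Finset.sum_add_distrib,
        σ.sum_comp _ _ fun _ => Equiv.Perm.mem_support.2, Finset.sum_const, add_sub_cancel_right]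
    _ ≤ ∑ i ∈ σ.support, ⌈q + g (σ i) - g i⌉ :=
      Finset.le_sum_of_subadditive _ Int.ceil_zero.le Int.ceil_add_le _ _

namespace AddValuation

variable {R Γ₀ : Type*} [CommRing R] [LinearOrderedAddCommMonoidWithTop Γ₀]
  (v : AddValuation R Γ₀)

lemma map_prod {ι : Type*} (s : Finset ι) (f : ι → R) :
    v (∏ i ∈ s, f i) = ∑ i ∈ s, v (f i) := by
  classical
  induction s using Finset.induction_on with
  | empty => simp
  | insert a s ha ih => rw [Finset.prod_insert ha, Finset.sum_insert ha, map_mul, ih]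

lemma map_units_intCast (u : ℤˣ) : v ((u : ℤ) : R) = 0 := by
  rcases Int.units_eq_one_or u with rfl | rfl <;> simp

lemma nonneg_of_le_map_sub_one {c : Γ₀} (hc : 0 ≤ c) {x : R} (hx : c ≤ v (x - 1)) : 0 ≤ v x := by
  simpa using v.map_le_add (hc.trans hx) (v.map_one.ge)

lemma le_map_mul_sub_one {c : Γ₀} (hc : 0 ≤ c) {x y : R} (hx : c ≤ v (x - 1))
    (hy : c ≤ v (y - 1)) : c ≤ v (x * y - 1) := by
  rw [show x * y - 1 = (x - 1) * y + (y - 1) by ring]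
  refine v.map_le_add ?_ hy
  rw [map_mul]
  simpa using add_le_add hx (v.nonneg_of_le_map_sub_one hc hy)

lemma le_map_prod_sub_one {c : Γ₀} (hc : 0 ≤ c) {ι : Type*} {s : Finset ι} {f : ι → R}
    (h : ∀ i ∈ s, c ≤ v (f i - 1)) : c ≤ v (∏ i ∈ s, f i - 1) :=
  Finset.prod_induction f (fun x => c ≤ v (x - 1)) (fun _ _ => v.le_map_mul_sub_one hc)
    (by simp) h

lemma le_map_det_one_add_sub_one {ι : Type*} [Fintype ι] [DecidableEq ι] (A : Matrix ι ι R)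
    {c : Γ₀} (hc : 0 ≤ c) (hdiag : ∀ i, c ≤ v (A i i))
    (hperm : ∀ σ : Equiv.Perm ι, σ ≠ 1 → c ≤ ∑ i ∈ σ.support, v (A (σ i) i)) :
    c ≤ v ((1 + A).det - 1) := by
  have hdiag' : ∀ i, c ≤ v ((1 + A) i i - 1) := fun i => by simpa using hdiag i
  have hexpand : (1 + A).det - 1 = ∑ σ : Equiv.Perm ι,
      ((Equiv.Perm.sign σ : ℤ) * ∏ i, (1 + A) (σ i) i - if σ = 1 then 1 else 0) := by
    rw [Matrix.det_apply', Finset.sum_sub_distrib, Finset.sum_ite_eq']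
    simp
  rw [hexpand]
  refine v.map_le_sum fun σ _ => ?_
  rcases eq_or_ne σ 1 with rfl | hσ
  · simpa using v.le_map_prod_sub_one hc fun i _ => hdiag' i
  rw [if_neg hσ, sub_zero, map_mul, v.map_units_intCast, zero_add, v.map_prod]
  calc c ≤ ∑ i ∈ σ.support, v (A (σ i) i) := hperm σ hσ
    _ = ∑ i ∈ σ.support, v ((1 + A) (σ i) i) := Finset.sum_congr rfl fun i hi => by
      rw [Matrix.add_apply, Matrix.one_apply_ne (Equiv.Perm.mem_support.1 hi), zero_add]
    _ ≤ ∑ i, v ((1 + A) (σ i) i) :=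
      Finset.sum_le_sum_of_subset_of_nonneg (Finset.subset_univ _) fun i _ hi => by
        rw [Equiv.Perm.notMem_support.1 hi]
        exact v.nonneg_of_le_map_sub_one hc (hdiag' i)

end AddValuation

lemma Matrix.det_one_add_single_same {R ι : Type*} [CommRing R] [Fintype ι] [DecidableEq ι]
    (i : ι) (y : R) : (1 + Matrix.single i i y).det = 1 + y := by
  rw [← Matrix.diagonal_single, ← Matrix.diagonal_one, Matrix.diagonal_add, Matrix.det_diagonal,
    Fintype.prod_eq_single i fun j hj => by simp [hj]]
  simp

namespace IsZValuation

variable {F : Type*} [Field F] {v : F → WithTop ℤ}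

lemma ceil_le_det_one_add_sub_one (hv : IsZValuation F v) {N e : ℕ} {n : ℤ} (hn : 0 ≤ n)
    {A : Matrix (Fin N) (Fin N) F} (hA : memRadicalPow v N e n A) :
    ((⌈(n : ℚ) / e⌉ : ℤ) : WithTop ℤ) ≤ v ((1 + A).det - 1) := by
  set B : Fin N → ℚ := fun a => (((a : ℕ) / (N / e) : ℕ) : ℚ) / e
  have hA' : ∀ a b, ((⌈(n : ℚ) / e + B a - B b⌉ : ℤ) : WithTop ℤ) ≤ v (A a b) := fun a b => by
    simpa only [B, add_div, sub_div] using hA a b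
  have hq : 0 ≤ (n : ℚ) / e := by positivity
  refine hv.toAddValuation_s16.le_map_det_one_add_sub_one A (by exact_mod_cast Int.ceil_nonneg hq)
    (fun i => by simpa using hA' i i) fun σ hσ => ?_
  calc ((⌈(n : ℚ) / e⌉ : ℤ) : WithTop ℤ)
      ≤ ((∑ i ∈ σ.support, ⌈(n : ℚ) / e + B (σ i) - B i⌉ : ℤ) : WithTop ℤ) := by
        exact_mod_cast σ.ceil_le_sum_support_ceil hσ B hq
    _ = ∑ i ∈ σ.support, ((⌈(n : ℚ) / e + B (σ i) - B i⌉ : ℤ) : WithTop ℤ) := WithTop.coe_sum _ _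
    _ ≤ ∑ i ∈ σ.support, v (A (σ i) i) := Finset.sum_le_sum fun i _ => hA' _ _

lemma memRadicalPow_single_zero (hv : IsZValuation F v) {N : ℕ} (hN : 0 < N) (e : ℕ) {n : ℤ}
    {y : F} (hy : ((⌈(n : ℚ) / e⌉ : ℤ) : WithTop ℤ) ≤ v y) :
    memRadicalPow v N e n (Matrix.single ⟨0, hN⟩ ⟨0, hN⟩ y) := by
  intro a b
  by_cases h : ⟨0, hN⟩ = a ∧ ⟨0, hN⟩ = b
  · obtain ⟨rfl, rfl⟩ := h
    simpa using hy
  · rw [Matrix.single_apply_of_ne _ _ _ _ _ h, hv.map_zero]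
    exact le_top

end IsZValuation

theorem det_one_add_radicalPow_eq_one_add_maximalIdealPow_general
    (p : ℕ) (F : Type*) [Field F] (v : F → WithTop ℤ)
    (hF : IsNonarchLocalField F v p)
    (N e : ℕ) (hN : 1 ≤ N)
    (n : ℕ) :
    {x : F | ∃ A : Matrix (Fin N) (Fin N) F, memRadicalPow v N e (n : ℤ) A ∧
        x = Matrix.det (1 + A)} =
    {x : F | ((Int.ceil ((n : ℚ) / (e : ℚ)) : ℤ) : WithTop ℤ) ≤ v (x - 1)} := by
  have hv := hF.isZValuation
  ext x
  simp only [Set.mem_ofPred_eq]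
  constructor
  · rintro ⟨A, hA, rfl⟩
    simpa only [Int.cast_natCast] using hv.ceil_le_det_one_add_sub_one n.cast_nonneg hA
  · intro hx
    refine ⟨_, hv.memRadicalPow_single_zero hN e (y := x - 1) ?_, ?_⟩
    · simpa only [Int.cast_natCast] using hx
    · rw [Matrix.det_one_add_single_same, add_sub_cancel]

/-- For a nonarchimedean local field `F` and the standard principal
hereditary order of period `e ∣ N` in `M_N(F)` with Jacobson radical `𝔓`, for every
`n ≥ 1` the image of `1 + 𝔓^n` under the determinant is exactly `1 + p_F^⌈n/e⌉`. -/
theorem det_one_add_radicalPow_eq_one_add_maximalIdealPow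
    (p : ℕ) (F : Type*) [Field F] (v : F → WithTop ℤ)
    (hF : IsNonarchLocalField F v p)
    (N e : ℕ) (hN : 1 ≤ N) (he : 1 ≤ e) (hdvd : e ∣ N)
    (n : ℕ) (hn : 1 ≤ n) :
    {x : F | ∃ A : Matrix (Fin N) (Fin N) F, memRadicalPow v N e (n : ℤ) A ∧
        x = Matrix.det (1 + A)} =
    {x : F | ((Int.ceil ((n : ℚ) / (e : ℚ)) : ℤ) : WithTop ℤ) ≤ v (x - 1)} :=
  det_one_add_radicalPow_eq_one_add_maximalIdealPow_general p F v hF N e hN n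
end
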